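/- If the parthood relation ⊑ on S is reflexive, transitive and separative, then every binary fusion is a binary sum: for all a, b, c ∈ S, if 𝔉 a {b, c} holds then Σ a {b, c} holds. -/

import Mathlib

/-- Overlap: `x` and `y` overlap iff some `z` is part of both. -/
def Overlap {α : Type*} (P : α → α → Prop) (x y : α) : Prop :=
  ∃ z, P z x ∧ P z y

/-- `a` is a mereological sum of `B`. -/
def MSum {α : Type*} (P : α → α → Prop) (a : α) (B : Set α) : Prop :=
  (∀ x ∈ B, P x a) ∧ (∀ z, P z a → ∃ x ∈ B, Overlap P z x)

/-- `a` is a mereological fusion of `B`. -/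
def MFusion {α : Type*} (P : α → α → Prop) (a : α) (B : Set α) : Prop :=
  ∀ z, Overlap P z a ↔ ∃ x ∈ B, Overlap P z x

/-- Separativity (strong supplementation). -/
def Separative {α : Type*} (P : α → α → Prop) : Prop :=
  ∀ a b, ¬ P a b → ∃ z, P z a ∧ ¬ Overlap P z b

/-! If some `x ∈ B` were not part of the fusion `a`, separativity would give a part of `x`
disjoint from `a`; but that part overlaps `x`, hence overlaps `a`. Conversely, by reflexivity every
part of `a` overlaps `a`, hence overlaps a member of `B`. -/

section

variable {α : Type*} {P : α → α → Prop}

theorem Overlap.of_part (hrefl : ∀ x, P x x) {z x : α} (h : P z x) : Overlap P z x :=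
  ⟨z, hrefl z, h⟩

namespace MFusion

variable {a : α} {B : Set α}

theorem part_of_mem (hrefl : ∀ x, P x x) (hsep : Separative P) (hfus : MFusion P a B)
    {x : α} (hx : x ∈ B) : P x a := by
  by_contra hxa
  obtain ⟨z, hzx, hza⟩ := hsep x a hxa
  exact hza ((hfus z).mpr ⟨x, hx, .of_part hrefl hzx⟩)

theorem exists_overlap_of_part (hrefl : ∀ x, P x x) (hfus : MFusion P a B) {z : α}
    (hza : P z a) : ∃ x ∈ B, Overlap P z x :=
  (hfus z).mp (.of_part hrefl hza)

theorem msum (hrefl : ∀ x, P x x) (hsep : Separative P) (hfus : MFusion P a B) :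
    MSum P a B :=
  ⟨fun _ hx => hfus.part_of_mem hrefl hsep hx, fun _ hza => hfus.exists_overlap_of_part hrefl hza⟩

end MFusion

end

theorem binary_fusion_is_binary_sum_general {α : Type*} (P : α → α → Prop)
    (hrefl : ∀ x, P x x)
    (hsep : Separative P) :
    ∀ a b c : α, MFusion P a {b, c} → MSum P a {b, c} :=
  fun _ _ _ hfus => hfus.msum hrefl hsep

theorem binary_fusion_is_binary_sum {α : Type*} (P : α → α → Prop)
    (hrefl : ∀ x, P x x) (htrans : ∀ x y z, P x y → P y z → P x z)
    (hsep : Separative P) :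
    ∀ a b c : α, MFusion P a {b, c} → MSum P a {b, c} :=
  binary_fusion_is_binary_sum_general P hrefl hsep
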